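/- Fix p > 0, let k = ⌊p⌋ + 1, and for n > p set p'_n = p/(k − (k−1)p/n). Let T_1, …, T_k be independent random matrices, each distributed as the adjacency matrix of a random graph following G(n, p'_n/n), and let T = T_1 + … + T_k. Then 0 < p'_n/n < 1 (so the T_s are well defined), and the conditional distribution of T given the event {T ∈ {0,1}^{n×n}} equals the distribution of the adjacency matrix of a random graph following G(n, p/n). -/

import Mathlib

open MeasureTheory Filter

noncomputable section

/-- The Bernoulli measure on `Bool` putting mass `a` on `true`. -/
def bernoulliMeasure (a : ℝ) : Measure Bool :=
  (ENNReal.ofReal a) • Measure.dirac true + (ENNReal.ofReal (1 - a)) • Measure.dirac false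

instance (a : ℝ) : IsFiniteMeasure (bernoulliMeasure a) := by
  constructor
  simp only [bernoulliMeasure, Measure.coe_add, Measure.coe_smul, Pi.add_apply, Pi.smul_apply,
    smul_eq_mul, measure_univ, mul_one]
  exact ENNReal.add_lt_top.2 ⟨ENNReal.ofReal_lt_top, ENNReal.ofReal_lt_top⟩

/-- The sample space for an Erdős–Rényi random graph on `Fin n`: one Boolean
(edge indicator) for every unordered pair `i < j`. -/
abbrev EdgeSpace (n : ℕ) : Type := {e : Fin n × Fin n // e.1 < e.2} → Bool

/-- The Erdős–Rényi model `G(n, a)`: the edge indicators are i.i.d. Bernoulli(a). -/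
def erMeasure (n : ℕ) (a : ℝ) : Measure (EdgeSpace n) :=
  Measure.pi fun _ => bernoulliMeasure a

/-- The (random, symmetric, zero-diagonal, 0-1) adjacency matrix of the graph. -/
def adjMatrix {n : ℕ} (ω : EdgeSpace n) : Matrix (Fin n) (Fin n) ℝ :=
  Matrix.of fun i j =>
    if h : i < j then (if ω ⟨(i, j), h⟩ then 1 else 0)
    else if h' : j < i then (if ω ⟨(j, i), h'⟩ then 1 else 0) else 0

/-- `K = D⁻¹ A`, the row-normalization of `A` by `D = diag(c·1 + A·1)`. -/
def Kmat {n : ℕ} (c : ℝ) (A : Matrix (Fin n) (Fin n) ℝ) : Matrix (Fin n) (Fin n) ℝ :=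
  Matrix.of fun i j => A i j / (c + ∑ l, A i l)

/-- `M = D⁻¹ (cJ + A)`, the row-normalization of `cJ + A`. -/
def Mmat {n : ℕ} (c : ℝ) (A : Matrix (Fin n) (Fin n) ℝ) : Matrix (Fin n) (Fin n) ℝ :=
  Matrix.of fun i j => (c / n + A i j) / (c + ∑ l, A i l)

/-- The spectral radius of a real matrix: the largest modulus of a (complex) eigenvalue. -/
def sr {n : ℕ} (A : Matrix (Fin n) (Fin n) ℝ) : ℝ :=
  sSup ((fun z : ℂ => ‖z‖) '' spectrum ℂ (A.map Complex.ofReal))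

end

noncomputable instance {n : ℕ} : MeasurableSpace (Matrix (Fin n) (Fin n) ℝ) :=
  inferInstanceAs (MeasurableSpace (Fin n → Fin n → ℝ))

instance (n : ℕ) (a : ℝ) : MeasureTheory.IsFiniteMeasure (erMeasure n a) := by
  constructor
  rw [erMeasure, MeasureTheory.Measure.pi_univ]
  exact ENNReal.prod_lt_top fun i _ => MeasureTheory.measure_lt_top _ _

/-!
Edge by edge, `T` counts how many of the `k` graphs contain the edge; these counts are
independent over the edges, each a sum of `k` independent Bernoulli(`a`) indicators with
`a = p'_n / n`. The event that `T` is 0–1 is the product over the edges of the events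
"count ≤ 1", so conditioning on it keeps the edges independent, and on it `T` is the adjacency
matrix of the graph of edges with count one. Per edge,
`P(count = 1 | count ≤ 1) = k a (1-a)^(k-1) / ((1-a)^k + k a (1-a)^(k-1)) = k a / (1 + (k-1) a)`,
which the choice of `p'_n` makes equal to `p / n`.
-/

open ProbabilityTheory hiding bernoulliMeasure
open Finset

namespace ProbabilityTheory

variable {Ω Ω' : Type*} [MeasurableSpace Ω] [MeasurableSpace Ω']

lemma map_cond_preimage (μ : Measure Ω) {f : Ω → Ω'} (hf : Measurable f) {s : Set Ω'}
    (hs : MeasurableSet s) : (μ[|f ⁻¹' s]).map f = (μ.map f)[|s] := by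
  rw [cond, cond, Measure.map_smul, Measure.restrict_map hf hs, Measure.map_apply hf hs]

lemma map_cond_congr (μ : Measure Ω) {s : Set Ω} (hs : MeasurableSet s) {f g : Ω → Ω'}
    (hfg : Set.EqOn f g s) : (μ[|s]).map f = (μ[|s]).map g :=
  Measure.map_congr (ae_cond_of_forall_mem hs hfg)

lemma cond_pi_univ_pi {ι : Type*} [Fintype ι] {α : ι → Type*} [∀ i, MeasurableSpace (α i)]
    (μ : ∀ i, Measure (α i)) [∀ i, IsFiniteMeasure (μ i)] {s : ∀ i, Set (α i)}
    (hs : ∀ i, MeasurableSet (s i)) :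
    (Measure.pi μ)[|Set.univ.pi s] = Measure.pi fun i => (μ i)[|s i] := by
  refine (Measure.pi_eq fun t ht => ?_).symm
  rw [cond_apply (.univ_pi hs), ← Set.pi_inter_distrib, Measure.pi_pi, Measure.pi_pi,
    ENNReal.prod_inv_distrib fun i _ j _ _ => .inr (measure_ne_top _ _),
    ← Finset.prod_mul_distrib]
  exact Finset.prod_congr rfl fun i _ => (cond_apply (hs i) _ _).symm

end ProbabilityTheory

namespace MeasureTheory.Measure

lemma map_swap_pi_pi {ι κ α : Type*} [Fintype ι] [Fintype κ] [MeasurableSpace α]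
    (μ : κ → ι → Measure α) [∀ k i, SigmaFinite (μ k i)] :
    (Measure.pi fun k => Measure.pi (μ k)).map (fun ω i k => ω k i)
      = Measure.pi fun i => Measure.pi fun k => μ k i := by
  refine (pi_eq_generateFrom (fun _ => generateFrom_pi) (fun _ => isPiSystem_pi)
    (fun i => FiniteSpanningSetsIn.pi fun k => (μ k i).toFiniteSpanningSetsIn) ?_).symm
  intro s hs
  choose t ht hts using hs
  obtain rfl : s = fun i => Set.univ.pi (t i) := funext fun i => (hts i).symm
  have hpre : (fun (ω : κ → ι → α) i k => ω k i) ⁻¹' Set.univ.pi (fun i => Set.univ.pi (t i))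
      = Set.univ.pi fun k => Set.univ.pi fun i => t i k := by
    ext ω; simp only [Set.mem_preimage, Set.mem_univ_pi]; exact forall_comm
  rw [map_apply (by fun_prop) (.univ_pi fun i => .univ_pi fun k => ht i k (Set.mem_univ k)),
    hpre]
  simp only [pi_pi]
  exact Finset.prod_comm

end MeasureTheory.Measure

@[simp] lemma bernoulliMeasure_singleton_true (a : ℝ) :
    bernoulliMeasure a {true} = ENNReal.ofReal a := by
  simp [bernoulliMeasure]

@[simp] lemma bernoulliMeasure_singleton_false (a : ℝ) :
    bernoulliMeasure a {false} = ENNReal.ofReal (1 - a) := by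
  simp [bernoulliMeasure]

lemma pi_bernoulliMeasure_singleton {ι : Type*} [Fintype ι] (a : ℝ) (v : ι → Bool) :
    Measure.pi (fun _ : ι => bernoulliMeasure a) {v}
      = ENNReal.ofReal a ^ #{i | v i = true} * ENNReal.ofReal (1 - a) ^ #{i | v i = false} := by
  have hsingle (b : Bool) :
      bernoulliMeasure a {b} = if b = true then ENNReal.ofReal a else ENNReal.ofReal (1 - a) := by
    cases b <;> simp
  simp only [← Set.univ_pi_singleton, Measure.pi_pi, hsingle, Finset.prod_ite, prod_const,
    Bool.not_eq_true]

lemma map_cond_eq_bernoulliMeasure {Ω : Type*} [MeasurableSpace Ω] (μ : Measure Ω) {s : Set Ω}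
    (hs : MeasurableSet s) {f : Ω → Bool} (hf : Measurable f) {x y : ℝ} (hx : 0 ≤ x)
    (hy : 0 ≤ y) (hxy : 0 < x + y) (hfalse : μ (s ∩ f ⁻¹' {false}) = ENNReal.ofReal x)
    (htrue : μ (s ∩ f ⁻¹' {true}) = ENNReal.ofReal y) :
    (μ[|s]).map f = bernoulliMeasure (y / (x + y)) := by
  have hμs : μ s = ENNReal.ofReal (x + y) := by
    rw [← measure_inter_add_sdiff s (hf (measurableSet_singleton true)), ENNReal.ofReal_add hx hy,
      htrue, add_comm, ← hfalse]
    congr 2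
    ext ω; simp
  have hcond (b : Bool) : (μ[|s]).map f {b} = μ (s ∩ f ⁻¹' {b}) / ENNReal.ofReal (x + y) := by
    rw [Measure.map_apply hf (measurableSet_singleton b), cond_apply hs, hμs,
      ENNReal.div_eq_inv_mul]
  refine Measure.ext_of_singleton fun b => ?_
  cases b
  · rw [hcond, hfalse, ← ENNReal.ofReal_div_of_pos hxy, bernoulliMeasure_singleton_false]
    congr 1
    field_simp
    ring
  · rw [hcond, htrue, ← ENNReal.ofReal_div_of_pos hxy, bernoulliMeasure_singleton_true]

section TrueCount

variable {ι : Type*} [Fintype ι]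

def trueCount (v : ι → Bool) : ℕ := #{i | v i = true}

lemma trueCount_eq_zero_iff {v : ι → Bool} : trueCount v = 0 ↔ v = fun _ => false := by
  simp [trueCount, funext_iff]

lemma setOf_trueCount_eq_one [DecidableEq ι] :
    {v : ι → Bool | trueCount v = 1} = Set.range fun i j => decide (j = i) := by
  ext v
  simp only [Set.mem_ofPred_eq, trueCount, card_eq_one, Set.mem_range, funext_iff,
    eq_comm (a := v _), Finset.ext_iff, mem_filter, mem_univ, true_and, mem_singleton]
  refine exists_congr fun i => forall_congr' fun j => ?_
  cases v j <;> simp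

lemma pi_bernoulliMeasure_trueCount_eq_one (a : ℝ) :
    Measure.pi (fun _ : ι => bernoulliMeasure a) {v | trueCount v = 1}
      = Fintype.card ι * (ENNReal.ofReal a * ENNReal.ofReal (1 - a) ^ (Fintype.card ι - 1)) := by
  classical
  have hinj : Function.Injective fun (i : ι) j => decide (j = i) := fun i i' h => by
    simpa using congrFun h i
  rw [setOf_trueCount_eq_one, ← Set.image_univ, ← Finset.coe_univ, ← Finset.coe_image,
    ← sum_measure_singleton, sum_image fun i _ i' _ h => hinj h,
    Finset.sum_congr rfl fun i _ => pi_bernoulliMeasure_singleton a _]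
  have hone (i : ι) : #{j | j = i} = 1 := card_eq_one.mpr ⟨i, by ext; simp⟩
  simp [Finset.filter_ne', hone]

end TrueCount

lemma map_cond_trueCount_le_one (m : ℕ) {a : ℝ} (ha0 : 0 ≤ a) (ha1 : a < 1) :
    ((Measure.pi fun _ : Fin (m + 1) => bernoulliMeasure a)[|{v | trueCount v ≤ 1}]).map
      (fun v => decide (trueCount v = 1)) = bernoulliMeasure ((m + 1) * a / (1 + m * a)) := by
  have h1a : 0 < 1 - a := by linarith
  have hfalse : {v : Fin (m + 1) → Bool | trueCount v ≤ 1}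
      ∩ (fun v => decide (trueCount v = 1)) ⁻¹' {false} = {fun _ => false} := by
    ext v
    simp only [Set.mem_inter_iff, Set.mem_ofPred_eq, Set.mem_preimage, Set.mem_singleton_iff,
      decide_eq_false_iff_not, ← trueCount_eq_zero_iff]
    omega
  have htrue : {v : Fin (m + 1) → Bool | trueCount v ≤ 1}
      ∩ (fun v => decide (trueCount v = 1)) ⁻¹' {true} = {v | trueCount v = 1} := by
    ext v
    simp only [Set.mem_inter_iff, Set.mem_ofPred_eq, Set.mem_preimage, Set.mem_singleton_iff,
      decide_eq_true_eq]
    omega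
  rw [map_cond_eq_bernoulliMeasure _ .of_discrete .of_discrete (x := (1 - a) ^ (m + 1))
    (y := (m + 1) * (a * (1 - a) ^ m)) (by positivity) (by positivity) (by positivity)]
  · congr 1
    field_simp
    ring
  · rw [hfalse, pi_bernoulliMeasure_singleton]
    simp [ENNReal.ofReal_pow h1a.le]
  · rw [htrue, pi_bernoulliMeasure_trueCount_eq_one, ENNReal.ofReal_mul (by positivity), ENNReal.ofReal_mul ha0, ENNReal.ofReal_pow h1a.le,
      ← Nat.cast_succ, ENNReal.ofReal_natCast]
    simp

section EdgeMatrix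

variable {n : ℕ} {R : Type*}

def edgeMatrix [Zero R] (x : {e : Fin n × Fin n // e.1 < e.2} → R) : Matrix (Fin n) (Fin n) R :=
  Matrix.of fun i j =>
    if h : i < j then x ⟨(i, j), h⟩ else if h' : j < i then x ⟨(j, i), h'⟩ else 0

lemma adjMatrix_eq_edgeMatrix (ω : EdgeSpace n) :
    adjMatrix ω = edgeMatrix fun e => if ω e then (1 : ℝ) else 0 := rfl

lemma sum_edgeMatrix [AddCommMonoid R] {κ : Type*} (s : Finset κ)
    (x : κ → {e : Fin n × Fin n // e.1 < e.2} → R) :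
    ∑ k ∈ s, edgeMatrix (x k) = edgeMatrix fun e => ∑ k ∈ s, x k e := by
  ext i j
  simp only [edgeMatrix, Matrix.sum_apply, Matrix.of_apply]
  split_ifs <;> simp

lemma forall_edgeMatrix_apply_mem_iff [Zero R] {x : {e : Fin n × Fin n // e.1 < e.2} → R}
    {T : Set R} (h0 : 0 ∈ T) : (∀ i j, edgeMatrix x i j ∈ T) ↔ ∀ e, x e ∈ T := by
  refine ⟨fun h e => by simpa [edgeMatrix, e.2] using h e.1.1 e.1.2, fun h i j => ?_⟩
  simp only [edgeMatrix, Matrix.of_apply]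
  split_ifs
  exacts [h _, h _, h0]

variable {κ : Type*} [Fintype κ]

lemma sum_adjMatrix (ωs : κ → EdgeSpace n) :
    ∑ s, adjMatrix (ωs s) = edgeMatrix fun e => (trueCount fun s => ωs s e : ℝ) := by
  simp only [adjMatrix_eq_edgeMatrix, sum_edgeMatrix, Finset.sum_boole]
  rfl

lemma sum_adjMatrix_apply_eq_zero_or_one_iff (ωs : κ → EdgeSpace n) :
    (∀ i j, (∑ s, adjMatrix (ωs s)) i j = 0 ∨ (∑ s, adjMatrix (ωs s)) i j = 1)
      ↔ ∀ e, trueCount (fun s => ωs s e) ≤ 1 := by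
  rw [sum_adjMatrix]
  refine (forall_edgeMatrix_apply_mem_iff (T := {0, 1}) (by simp)).trans ?_
  simp [Nat.le_one_iff_eq_zero_or_eq_one]

lemma sum_adjMatrix_eq_adjMatrix_of_trueCount_le_one {ωs : κ → EdgeSpace n}
    (h : ∀ e, trueCount (fun s => ωs s e) ≤ 1) :
    ∑ s, adjMatrix (ωs s) = adjMatrix fun e => decide (trueCount (fun s => ωs s e) = 1) := by
  rw [sum_adjMatrix, adjMatrix_eq_edgeMatrix]
  congr 1 with e
  rcases Nat.le_one_iff_eq_zero_or_eq_one.mp (h e) with he | he <;> simp [he]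

end EdgeMatrix

noncomputable def thinnedEdgeProb (m : ℕ) (p n : ℝ) : ℝ := p / (m + 1 - m * p / n) / n

section ThinnedEdgeProb

variable (m : ℕ) {p n : ℝ}

lemma thinnedEdgeProb_eq (hn : 0 < n) : thinnedEdgeProb m p n = p / ((m + 1) * n - m * p) := by
  rw [thinnedEdgeProb, div_div, sub_mul, div_mul_cancel₀ _ hn.ne']

lemma thinnedEdgeProb_denom_pos (hp : 0 < p) (hpn : p < n) : 0 < (m + 1) * n - m * p := by
  nlinarith [(m.cast_nonneg : (0 : ℝ) ≤ m)]

lemma thinnedEdgeProb_pos (hp : 0 < p) (hpn : p < n) : 0 < thinnedEdgeProb m p n := by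
  rw [thinnedEdgeProb_eq m (hp.trans hpn)]
  exact div_pos hp (thinnedEdgeProb_denom_pos m hp hpn)

lemma thinnedEdgeProb_lt_one (hp : 0 < p) (hpn : p < n) : thinnedEdgeProb m p n < 1 := by
  rw [thinnedEdgeProb_eq m (hp.trans hpn), div_lt_one (thinnedEdgeProb_denom_pos m hp hpn)]
  nlinarith [(m.cast_nonneg : (0 : ℝ) ≤ m)]

lemma mul_thinnedEdgeProb_div (hp : 0 < p) (hpn : p < n) :
    (m + 1) * thinnedEdgeProb m p n / (1 + m * thinnedEdgeProb m p n) = p / n := by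
  have hn : 0 < n := hp.trans hpn
  have hd := thinnedEdgeProb_denom_pos m hp hpn
  rw [thinnedEdgeProb_eq m hn]
  field_simp
  ring

end ThinnedEdgeProb

/-- with k = ⌊p⌋+1 and p'_n = p/(k − (k−1)p/n), the sum
T = T_1 + ⋯ + T_k of k i.i.d. adjacency matrices of G(n, p'_n/n) graphs,
conditioned to have 0–1 entries, is distributed as the adjacency matrix of a
G(n, p/n) graph; moreover 0 < p'_n/n < 1 so everything is well defined. -/
theorem sum_of_adjacency_matrices_conditional_distribution
    (p : ℝ) (hp : 0 < p) (n : ℕ) (hn : p < n) :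
    0 < (p / (((⌊p⌋₊ : ℝ) + 1) - (⌊p⌋₊ : ℝ) * p / n)) / n ∧
    (p / (((⌊p⌋₊ : ℝ) + 1) - (⌊p⌋₊ : ℝ) * p / n)) / n < 1 ∧
    MeasureTheory.Measure.map
      (fun ωs : Fin (⌊p⌋₊ + 1) → EdgeSpace n => ∑ s, adjMatrix (ωs s))
      (ProbabilityTheory.cond
        (MeasureTheory.Measure.pi fun _ : Fin (⌊p⌋₊ + 1) =>
          erMeasure n ((p / (((⌊p⌋₊ : ℝ) + 1) - (⌊p⌋₊ : ℝ) * p / n)) / n))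
        {ωs | ∀ i j : Fin n,
          (∑ s, adjMatrix (ωs s)) i j = 0 ∨ (∑ s, adjMatrix (ωs s)) i j = 1})
      = MeasureTheory.Measure.map adjMatrix (erMeasure n (p / n)) := by
  rw [show p / ((⌊p⌋₊ : ℝ) + 1 - ⌊p⌋₊ * p / n) / n = thinnedEdgeProb ⌊p⌋₊ p n from rfl]
  set m := ⌊p⌋₊
  have ha0 := thinnedEdgeProb_pos m hp hn
  have ha1 := thinnedEdgeProb_lt_one m hp hn
  refine ⟨ha0, ha1, ?_⟩
  let swap : (Fin (m + 1) → EdgeSpace n) → _ := fun ωs e s => ωs s e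
  let S : Set (Fin (m + 1) → Bool) := {v | trueCount v ≤ 1}
  have hevent : {ωs : Fin (m + 1) → EdgeSpace n | ∀ i j : Fin n,
      (∑ s, adjMatrix (ωs s)) i j = 0 ∨ (∑ s, adjMatrix (ωs s)) i j = 1}
        = swap ⁻¹' Set.univ.pi fun _ => S :=
    Set.ext fun ωs => (sum_adjMatrix_apply_eq_zero_or_one_iff ωs).trans (by simp [S, swap])
  have hon : Set.EqOn (fun ωs => ∑ s, adjMatrix (ωs s))
      (adjMatrix ∘ (fun η e => decide (trueCount (η e) = 1)) ∘ swap)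
      (swap ⁻¹' Set.univ.pi fun _ => S) :=
    fun ωs hωs => sum_adjMatrix_eq_adjMatrix_of_trueCount_le_one fun e => hωs e trivial
  simp only [erMeasure]
  rw [hevent, map_cond_congr _ .of_discrete hon,
    ← Measure.map_map .of_discrete .of_discrete, ← Measure.map_map .of_discrete .of_discrete,
    map_cond_preimage _ .of_discrete .of_discrete, Measure.map_swap_pi_pi,
    cond_pi_univ_pi _ fun _ => .of_discrete,
    Measure.pi_map_pi (f := fun _ v => decide (trueCount v = 1)) fun _ => .of_discrete,
    map_cond_trueCount_le_one m ha0.le ha1, mul_thinnedEdgeProb_div m hp hn]
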